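/- arXiv:1709.05123 — 5 statements merged into one kernel-verified Lean document; each statement's English description precedes it below -/
import Mathlib

section
/- A probabilistic abstract reduction system is almost-surely terminating and confluent if and only if it is almost-surely convergent. -/
open scoped ENNReal NNReal

/-- An element `t` is a *normal form* of the reduction relation `r`
if there is no `u` with `r t u`. -/
def NormalForm {A : Type*} (r : A → A → Prop) (t : A) : Prop := ¬∃ u, r t u

/-- `NFof r s` is the set of normal forms reachable from `s`
via the reflexive-transitive closure of `r`. -/
def NFof {A : Type*} (r : A → A → Prop) (s : A) : Set A :=
  {t | NormalForm r t ∧ Relation.ReflTransGen r s t}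

/-- `l` is a finite path from `s` to `t`: a nonempty list starting at `s`,
ending at `t`, whose consecutive elements are related by `r`.
(A list `[s₀, s₁, …, sₙ]` represents the path `s₀ → s₁ → ⋯ → sₙ`, `n ≥ 0`.) -/
def IsPath {A : Type*} (r : A → A → Prop) (s t : A) (l : List A) : Prop :=
  l.Chain' r ∧ l.head? = some s ∧ l.getLast? = some t

/-- Confluence of an abstract reduction system. -/
def Confluent {A : Type*} (r : A → A → Prop) : Prop :=
  ∀ s s₁ s₂, Relation.ReflTransGen r s s₁ → Relation.ReflTransGen r s s₂ →
    ∃ t, Relation.ReflTransGen r s₁ t ∧ Relation.ReflTransGen r s₂ t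

/-- An ARS is normalizing if every element reaches some normal form. -/
def Normalizing {A : Type*} (r : A → A → Prop) : Prop :=
  ∀ s, ∃ t, NormalForm r t ∧ Relation.ReflTransGen r s t

/-- A probabilistic abstract reduction system (PARS) on a countable set `A`:
a reduction relation `rel` and probabilities `P : A → A → ℝ≥0` with
`P s t > 0` iff `s → t`, and `∑ₜ P s t = 1` for every reducible `s`. -/
structure PARS (A : Type*) [Countable A] where
  rel : A → A → Prop
  P : A → A → ℝ≥0
  pos_iff : ∀ s t, 0 < P s t ↔ rel s t
  sum_one : ∀ s, (∃ t, rel s t) → ∑' t, (P s t : ℝ≥0∞) = 1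

namespace PARS

variable {A : Type*} [Countable A]

/-- The probability of a finite path `[s₀, s₁, …, sₙ]`,
namely `∏_{i=1}^n P(s_{i-1}, s_i)`. -/
noncomputable def pathProb (S : PARS A) (l : List A) : ℝ≥0∞ :=
  ((l.zip l.tail).map fun p => (S.P p.1 p.2 : ℝ≥0∞)).prod

/-- `P(s →* t)`: the sum, over all finite paths from `s` to `t`,
of the path probabilities. -/
noncomputable def probReach (S : PARS A) (s t : A) : ℝ≥0∞ :=
  ∑' l : {l : List A // IsPath S.rel s t l}, S.pathProb l.1

/-- `∑_{t ∈ NF(s)} P(s →* t)`. -/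
noncomputable def probNF (S : PARS A) (s : A) : ℝ≥0∞ :=
  ∑' t : NFof S.rel s, S.probReach s t.1

/-- `P(s →∞) := 1 - ∑_{t ∈ NF(s)} P(s →* t)`, the probability of diverging. -/
noncomputable def probDiverge (S : PARS A) (s : A) : ℝ :=
  1 - (S.probNF s).toReal

/-- Almost-sure termination: every element diverges with probability `0`. -/
def ASTerminating (S : PARS A) : Prop := ∀ s, S.probDiverge s = 0

/-- Almost-sure convergence: whenever `s →* s₁` and `s →* s₂`, there is a
normal form `t` with `s₁ →* t`, `s₂ →* t` and `P(s₁ →* t) = P(s₂ →* t) = 1`. -/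
def ASConvergent (S : PARS A) : Prop :=
  ∀ s s₁ s₂, Relation.ReflTransGen S.rel s s₁ → Relation.ReflTransGen S.rel s s₂ →
    ∃ t, NormalForm S.rel t ∧ Relation.ReflTransGen S.rel s₁ t ∧
      Relation.ReflTransGen S.rel s₂ t ∧
      S.probReach s₁ t = 1 ∧ S.probReach s₂ t = 1

/-- Local almost-sure convergence: whenever `s → s₁` and `s → s₂`, there is a
normal form `t` with `s₁ →* t`, `s₂ →* t` and `P(s₁ →* t) = P(s₂ →* t) = 1`. -/
def LocallyASConvergent (S : PARS A) : Prop :=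
  ∀ s s₁ s₂, S.rel s s₁ → S.rel s s₂ →
    ∃ t, NormalForm S.rel t ∧ Relation.ReflTransGen S.rel s₁ t ∧
      Relation.ReflTransGen S.rel s₂ t ∧
      S.probReach s₁ t = 1 ∧ S.probReach s₂ t = 1

end PARS

lemma nf_rtg_eq {A : Type*} {r : A → A → Prop} {t u : A}
    (h : NormalForm r t) (h2 : Relation.ReflTransGen r t u) : u = t := by
  rcases h2.cases_head with rfl | ⟨c, hc, _⟩
  · rfl
  · exact absurd ⟨c, hc⟩ h

lemma probNF_eq_of_singleton {A : Type*} [Countable A] (S : PARS A) {s t : A}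
    (h : NFof S.rel s = {t}) : S.probNF s = S.probReach s t := by
  unfold PARS.probNF
  rw [h]
  exact tsum_singleton t _

lemma nfof_nonempty_of_probNF_ne_zero {A : Type*} [Countable A] (S : PARS A) {s : A}
    (h : S.probNF s ≠ 0) : ∃ t, t ∈ NFof S.rel s := by
  by_contra hne
  apply h
  unfold PARS.probNF
  have : NFof S.rel s = ∅ := Set.eq_empty_iff_forall_notMem.2 (fun t ht => hne ⟨t, ht⟩)
  rw [this]
  exact tsum_empty

/-- A PARS is almost-surely terminating and confluent
if and only if it is almost-surely convergent. -/
theorem asTerminating_and_confluent_iff_asConvergent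
    {A : Type*} [Countable A] (S : PARS A) :
    (S.ASTerminating ∧ Confluent S.rel) ↔ S.ASConvergent := by
  constructor
  · rintro ⟨hAST, hconf⟩ s s₁ s₂ h1 h2
    -- every state has probNF = 1
    have key : ∀ a, S.probNF a = 1 := by
      intro a
      have := hAST a
      unfold PARS.probDiverge at this
      have htr : (S.probNF a).toReal = 1 := by linarith
      rcases eq_or_ne (S.probNF a) ⊤ with htop | htop
      · rw [htop] at htr; simp at htr
      · rwa [ENNReal.toReal_eq_one_iff] at htr
    -- get a normal form reachable from s₁
    obtain ⟨t, hnf, hrt1⟩ := nfof_nonempty_of_probNF_ne_zero S (by rw [key s₁]; norm_num)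
    -- s₂ →* t via confluence
    have hrt2 : Relation.ReflTransGen S.rel s₂ t := by
      obtain ⟨u, hu1, hu2⟩ := hconf s t s₂ (h1.trans hrt1) h2
      rwa [nf_rtg_eq hnf hu1] at hu2
    have huniq : ∀ a, Relation.ReflTransGen S.rel a t → NFof S.rel a = {t} := by
      intro a hat
      ext t'
      constructor
      · rintro ⟨hnf', hrt'⟩
        obtain ⟨u, hu1, hu2⟩ := hconf a t' t hrt' hat
        have e1 := nf_rtg_eq hnf' hu1
        have e2 := nf_rtg_eq hnf hu2
        simp only [Set.mem_singleton_iff]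
        rw [← e1, e2]
      · rintro rfl
        exact ⟨hnf, hat⟩
    refine ⟨t, hnf, hrt1, hrt2, ?_, ?_⟩
    · rw [← probNF_eq_of_singleton S (huniq s₁ hrt1), key]
    · rw [← probNF_eq_of_singleton S (huniq s₂ hrt2), key]
  · intro hconv
    constructor
    · intro s
      obtain ⟨t, hnf, hst, -, hp, -⟩ :=
        hconv s s s Relation.ReflTransGen.refl Relation.ReflTransGen.refl
      have hset : NFof S.rel s = {t} := by
        ext t'
        constructor
        · rintro ⟨hnf', hrt'⟩
          obtain ⟨u, -, hu1, hu2, -, -⟩ := hconv s t' t hrt' hst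
          have e1 := nf_rtg_eq hnf' hu1
          have e2 := nf_rtg_eq hnf hu2
          simp only [Set.mem_singleton_iff]
          rw [← e1, e2]
        · rintro rfl
          exact ⟨hnf, hst⟩
      unfold PARS.ASTerminating PARS.probDiverge at *
      rw [probNF_eq_of_singleton S hset, hp]
      simp
    · intro s s₁ s₂ h1 h2
      obtain ⟨t, _, ht1, ht2, -, -⟩ := hconv s s₁ s₂ h1 h2
      exact ⟨t, ht1, ht2⟩
end

section
/- Let R^P = ((A,→_R),P) be an almost-surely terminating probabilistic abstract reduction system, R' = (A',→_{R'}) an abstract reduction system, and G : A → A' a mapping such that: (C1) R' is confluent; (C2) (A,→_R) is normalizing; (C3) whenever s →_R t then G(s) and G(t) are related by the reflexive-symmetric-transitive closure of →_{R'}; (C4) if t is a normal form of R then G(t) is a normal form of R'; (C5) G is injective on normal forms of R. Then R^P is almost-surely convergent. -/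
open scoped ENNReal NNReal

private lemma nf_eq_of_reflTransGen {A : Type*} {r : A → A → Prop} {x y : A}
    (h : Relation.ReflTransGen r x y) (hx : NormalForm r x) : x = y := by
  rcases (Relation.ReflTransGen.cases_head h) with rfl | ⟨z, hz, _⟩
  · rfl
  · exact absurd ⟨z, hz⟩ hx

private lemma eqvGen_join {A' : Type*} {r' : A' → A' → Prop} (hC1 : Confluent r')
    {a b : A'} (h : Relation.EqvGen r' a b) :
    ∃ c, Relation.ReflTransGen r' a c ∧ Relation.ReflTransGen r' b c := by
  induction h with
  | rel a b h => exact ⟨b, Relation.ReflTransGen.single h, .refl⟩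
  | refl a => exact ⟨a, .refl, .refl⟩
  | symm a b _ ih => obtain ⟨c, h1, h2⟩ := ih; exact ⟨c, h2, h1⟩
  | trans a b c _ _ ih1 ih2 =>
      obtain ⟨d, had, hbd⟩ := ih1
      obtain ⟨e, hbe, hce⟩ := ih2
      obtain ⟨f, hdf, hef⟩ := hC1 b d e hbd hbe
      exact ⟨f, had.trans hdf, hce.trans hef⟩

/-- Curien–Ghelli transformation for PARS: if `S` is an
almost-surely terminating PARS and there is an ARS `r'` and a map `G`
satisfying (C1)–(C5), then `S` is almost-surely convergent. -/
theorem asConvergent_of_transformation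
    {A : Type*} [Countable A] {A' : Type*} (S : PARS A)
    (r' : A' → A' → Prop) (G : A → A')
    (hterm : S.ASTerminating)
    (hC1 : Confluent r')
    (hC2 : Normalizing S.rel)
    (hC3 : ∀ s t, S.rel s t → Relation.EqvGen r' (G s) (G t))
    (hC4 : ∀ t, NormalForm S.rel t → NormalForm r' (G t))
    (hC5 : ∀ t u, NormalForm S.rel t → NormalForm S.rel u → G t = G u → t = u) :
    S.ASConvergent := by
  -- lift G along reflTransGen
  have hG : ∀ a b, Relation.ReflTransGen S.rel a b → Relation.EqvGen r' (G a) (G b) := by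
    intro a b h
    induction h with
    | refl => exact .refl _
    | tail _ hstep ih => exact .trans _ _ _ ih (hC3 _ _ hstep)
  -- uniqueness of reachable normal forms
  have huniq : ∀ s t₁ t₂, t₁ ∈ NFof S.rel s → t₂ ∈ NFof S.rel s → t₁ = t₂ := by
    intro s t₁ t₂ ⟨hnf₁, h₁⟩ ⟨hnf₂, h₂⟩
    have heqv : Relation.EqvGen r' (G t₁) (G t₂) :=
      .trans _ _ _ (.symm _ _ (hG _ _ h₁)) (hG _ _ h₂)
    obtain ⟨c, hc₁, hc₂⟩ := eqvGen_join hC1 heqv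
    have e₁ := nf_eq_of_reflTransGen hc₁ (hC4 _ hnf₁)
    have e₂ := nf_eq_of_reflTransGen hc₂ (hC4 _ hnf₂)
    exact hC5 _ _ hnf₁ hnf₂ (e₁.trans e₂.symm)
  -- probNF s = 1 for every s
  have hone : ∀ s, S.probNF s = 1 := by
    intro s
    have h := hterm s
    unfold PARS.probDiverge at h
    have ht : (S.probNF s).toReal = 1 := by linarith
    rcases eq_or_ne (S.probNF s) ⊤ with h' | h'
    · rw [h'] at ht; simp at ht
    · exact (ENNReal.toReal_eq_one_iff _).mp ht
  -- for every s with nf t reachable, probReach s t = 1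
  have hreach : ∀ s t, t ∈ NFof S.rel s → S.probReach s t = 1 := by
    intro s t ht
    have : S.probNF s = S.probReach s t := by
      refine tsum_eq_single (⟨t, ht⟩ : NFof S.rel s) ?_
      intro u hu
      exact absurd (Subtype.ext (huniq s u.1 t u.2 ht)) hu
    rw [← this, hone]
  intro s s₁ s₂ h₁ h₂
  obtain ⟨t₁, hnf₁, hr₁⟩ := hC2 s₁
  obtain ⟨t₂, hnf₂, hr₂⟩ := hC2 s₂
  have ht₁ : t₁ ∈ NFof S.rel s := ⟨hnf₁, h₁.trans hr₁⟩
  have ht₂ : t₂ ∈ NFof S.rel s := ⟨hnf₂, h₂.trans hr₂⟩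
  have heq : t₁ = t₂ := huniq s t₁ t₂ ht₁ ht₂
  subst heq
  exact ⟨t₁, hnf₁, hr₁, hr₂, hreach s₁ t₁ ⟨hnf₁, hr₁⟩, hreach s₂ t₁ ⟨hnf₂, hr₂⟩⟩
end

section
/- Let R = (A,→_R) and R' = (A',→_{R'}) be abstract reduction systems and G : A → A' a mapping such that: (C1) R' is confluent; (C2) R is normalizing; (C3) whenever s →_R t then G(s) and G(t) are related by the reflexive-symmetric-transitive closure of →_{R'}; (C4) if t is a normal form of R then G(t) is a normal form of R'; (C5) G is injective on normal forms of R. Then R is confluent. -/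
open scoped ENNReal NNReal

/-!
Two elements with a common ancestor are convertible, and so are their normal forms `t`, `u`.
By (C3) `G t` and `G u` are then convertible in `R'`; confluence of `R'` joins them, and as both
are normal forms by (C4), the join forces `G t = G u`, whence `t = u` by (C5). Since `R` is
normalizing, uniqueness of normal forms within a conversion class is confluence.
-/

open Relation

namespace Relation.EqvGen

variable {α β : Type*} {r : α → α → Prop} {r' : β → β → Prop} {f : β → α}

theorem map (hf : ∀ a b, r' a b → EqvGen r (f a) (f b)) {a b : β} (h : EqvGen r' a b) :
    EqvGen r (f a) (f b) :=
  (InvImage.equivalence _ f (EqvGen.is_equivalence r)).eqvGen_iff.1 (EqvGen.mono hf a b h)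

end Relation.EqvGen

section

variable {α : Type*} {r : α → α → Prop}

theorem NormalForm.eq_of_reflTransGen {a b : α} (ha : NormalForm r a) (h : ReflTransGen r a b) :
    b = a := by
  rcases h.cases_head with rfl | ⟨c, hac, -⟩
  · rfl
  · exact absurd ⟨c, hac⟩ ha

theorem Confluent.join_of_eqvGen (hr : Confluent r) {a b : α} (h : EqvGen r a b) :
    Join (ReflTransGen r) a b :=
  have hjoin : Equivalence (Join (ReflTransGen r)) :=
    equivalence_join fun a _ _ hab hac => hr a _ _ hab hac
  hjoin.eqvGen_iff.1 (EqvGen.mono (fun _ b hab => ⟨b, .single hab, .refl⟩) a b h)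

theorem Confluent.eq_of_eqvGen (hr : Confluent r) {a b : α} (ha : NormalForm r a)
    (hb : NormalForm r b) (h : EqvGen r a b) : a = b := by
  obtain ⟨c, hac, hbc⟩ := hr.join_of_eqvGen h
  rw [← ha.eq_of_reflTransGen hac, ← hb.eq_of_reflTransGen hbc]

theorem Normalizing.confluent_of_unique_normalForm (hr : Normalizing r)
    (huniq : ∀ a b, NormalForm r a → NormalForm r b → EqvGen r a b → a = b) : Confluent r := by
  intro s s₁ s₂ h₁ h₂
  obtain ⟨t₁, ht₁, hs₁t₁⟩ := hr s₁
  obtain ⟨t₂, ht₂, hs₂t₂⟩ := hr s₂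
  have hconv : EqvGen r t₁ t₂ :=
    have hle := EqvGen.reflTransGen_le_eqvGen r
    .trans _ _ _ (.symm _ _ (hle _ _ (h₁.trans hs₁t₁))) (hle _ _ (h₂.trans hs₂t₂))
  obtain rfl := huniq t₁ t₂ ht₁ ht₂ hconv
  exact ⟨t₁, hs₁t₁, hs₂t₂⟩

end

/-- Curien–Ghelli: for ARS `r` on `A` and `r'` on `A'` and a map
`G : A → A'` satisfying (C1)–(C5), `r` is confluent. -/
theorem confluent_of_transformation
    {A A' : Type*} (r : A → A → Prop) (r' : A' → A' → Prop) (G : A → A')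
    (hC1 : Confluent r')
    (hC2 : Normalizing r)
    (hC3 : ∀ s t, r s t → Relation.EqvGen r' (G s) (G t))
    (hC4 : ∀ t, NormalForm r t → NormalForm r' (G t))
    (hC5 : ∀ t u, NormalForm r t → NormalForm r u → G t = G u → t = u) :
    Confluent r :=
  hC2.confluent_of_unique_normalForm fun t u ht hu htu =>
    hC5 t u ht hu (hC1.eq_of_eqvGen (hC4 t ht) (hC4 u hu) (htu.map hC3))
end

section
/- If a probabilistic abstract reduction system is locally almost-surely convergent then it is almost-surely terminating. -/
open scoped ENNReal NNReal

/-!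
Paths ending in a normal form form a prefix-free family, so by induction on their length their
total probability is at most one. Conversely, extending paths by a first step shows that
`P(s →* NF) ≥ ∑_b P(s, b) · P(b →* NF)`; local almost-sure convergence (applied with
`s₁ = s₂`) says every successor `b` reaches some normal form with probability one, so
`P(s →* NF) ≥ ∑_b P(s, b) = 1`.
-/

section Paths

variable {A : Type*} {r : A → A → Prop} {s t b : A} {l : List A}

def terminalPaths (r : A → A → Prop) (s : A) : Set (List A) :=
  {l | ∃ t, NormalForm r t ∧ IsPath r s t l}

lemma isPath_singleton (r : A → A → Prop) (s : A) : IsPath r s s [s] :=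
  ⟨List.isChain_singleton s, rfl, rfl⟩

lemma isPath_cons_iff (hb : l.head? = some b) : IsPath r s t (s :: l) ↔ r s b ∧ IsPath r b t l := by
  obtain ⟨l, rfl⟩ := List.head?_eq_some_iff.1 hb
  exact ⟨fun ⟨hchain, _, hlast⟩ => ⟨(List.isChain_cons_cons.1 hchain).1,
      (List.isChain_cons_cons.1 hchain).2, rfl, hlast⟩,
    fun ⟨hsb, hchain, _, hlast⟩ => ⟨List.isChain_cons_cons.2 ⟨hsb, hchain⟩, rfl, hlast⟩⟩

lemma IsPath.reflTransGen (hl : IsPath r s t l) : Relation.ReflTransGen r s t := by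
  obtain ⟨hchain, hhead, hlast⟩ := hl
  have hne : l ≠ [] := by rintro rfl; simp at hhead
  rw [List.head?_eq_some_head hne, Option.some_inj] at hhead
  rw [List.getLast?_eq_some_getLast hne, Option.some_inj] at hlast
  exact hhead ▸ hlast ▸ List.relationReflTransGen_of_exists_isChain l hchain hne

lemma head?_eq_of_mem_terminalPaths (hl : l ∈ terminalPaths r s) : l.head? = some s := by
  obtain ⟨_, _, _, hhead, _⟩ := hl
  exact hhead

lemma mem_terminalPaths_iff :
    l ∈ terminalPaths r s ↔
      NormalForm r s ∧ l = [s] ∨ ∃ b l', r s b ∧ l' ∈ terminalPaths r b ∧ l = s :: l' := by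
  constructor
  · rintro ⟨t, ht, hpath⟩
    obtain ⟨l', rfl⟩ := List.head?_eq_some_iff.1 hpath.2.1
    cases l' with
    | nil =>
      obtain rfl : s = t := Option.some_injective _ hpath.2.2
      exact Or.inl ⟨ht, rfl⟩
    | cons b l' =>
      obtain ⟨hsb, hpath'⟩ := (isPath_cons_iff rfl).1 hpath
      exact Or.inr ⟨b, b :: l', hsb, ⟨t, ht, hpath'⟩, rfl⟩
  · rintro (⟨hs, rfl⟩ | ⟨b, l', hsb, ⟨t, ht, hpath⟩, rfl⟩)
    · exact ⟨s, hs, isPath_singleton r s⟩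
    · exact ⟨t, ht, (isPath_cons_iff hpath.2.1).2 ⟨hsb, hpath⟩⟩

end Paths

namespace PARS

variable {A : Type*} [Countable A] (S : PARS A)

@[simp]
lemma pathProb_singleton (s : A) : S.pathProb [s] = 1 := by
  simp [pathProb]

lemma pathProb_cons {b : A} {l : List A} (hb : l.head? = some b) (s : A) :
    S.pathProb (s :: l) = S.P s b * S.pathProb l := by
  obtain ⟨l, rfl⟩ := List.head?_eq_some_iff.1 hb
  simp [pathProb]

lemma tsum_P_succ_eq_one {s : A} (hs : ∃ b, S.rel s b) :
    ∑' b : {b // S.rel s b}, (S.P s b : ℝ≥0∞) = 1 := by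
  rw [← S.sum_one s hs]
  refine tsum_subtype_eq_of_support_subset (f := fun b => (S.P s b : ℝ≥0∞))
    (s := {b | S.rel s b}) fun b hb => (S.pos_iff s b).1 ?_
  simpa [pos_iff_ne_zero] using hb

lemma probNF_eq_tsum_terminalPaths (s : A) :
    S.probNF s = ∑' l : terminalPaths S.rel s, S.pathProb l := by
  let e : (Σ t : NFof S.rel s, {l // IsPath S.rel s t l}) ≃ terminalPaths S.rel s :=
    Equiv.ofBijective (fun p => ⟨p.2, p.1, p.1.2.1, p.2.2⟩) ⟨by
      rintro ⟨⟨t₁, _⟩, l₁, hl₁⟩ ⟨⟨t₂, _⟩, l₂, hl₂⟩ h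
      obtain rfl : l₁ = l₂ := congrArg Subtype.val h
      obtain rfl : t₁ = t₂ := Option.some_injective _ (hl₁.2.2.symm.trans hl₂.2.2)
      rfl, fun ⟨l, t, ht, hl⟩ => ⟨⟨⟨t, ht, hl.reflTransGen⟩, l, hl⟩, rfl⟩⟩
  rw [← e.tsum_eq]
  exact (ENNReal.tsum_sigma' fun p : Σ t : NFof S.rel s, {l // IsPath S.rel s t l} =>
    S.pathProb p.2).symm

lemma probReach_le_probNF {s t : A} (ht : t ∈ NFof S.rel s) : S.probReach s t ≤ S.probNF s :=
  ENNReal.le_tsum (⟨t, ht⟩ : NFof S.rel s)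

lemma tsum_pathProb_le_one_of_length_le (n : ℕ) (s : A) (L : Set (List A))
    (hLs : L ⊆ terminalPaths S.rel s) (hLn : ∀ l ∈ L, l.length ≤ n) :
    ∑' l : L, S.pathProb l ≤ 1 := by
  induction n generalizing s L with
  | zero =>
    obtain rfl : L = ∅ := Set.eq_empty_of_forall_notMem fun l hl => by
      simpa [List.length_eq_zero_iff.1 (Nat.le_zero.1 (hLn l hl))] using
        head?_eq_of_mem_terminalPaths (hLs hl)
    simp
  | succ n ih =>
    by_cases hs : NormalForm S.rel s
    · have hL : L ⊆ {[s]} := fun l hl => by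
        rcases mem_terminalPaths_iff.1 (hLs hl) with ⟨-, rfl⟩ | ⟨b, -, hsb, -⟩
        exacts [rfl, absurd ⟨b, hsb⟩ hs]
      calc ∑' l : L, S.pathProb l ≤ ∑' l : ({[s]} : Set (List A)), S.pathProb l :=
            ENNReal.tsum_mono_subtype _ hL
        _ = 1 := by simp
    · let tails (b : A) : Set (List A) := {l | s :: l ∈ L ∧ l ∈ terminalPaths S.rel b}
      have hL : L ⊆ ⋃ b, List.cons s '' tails b := fun l hl => by
        rcases mem_terminalPaths_iff.1 (hLs hl) with ⟨hs', -⟩ | ⟨b, l', -, hl', rfl⟩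
        exacts [absurd hs' hs, Set.mem_iUnion.2 ⟨b, l', ⟨hl, hl'⟩, rfl⟩]
      have htails (b : A) : ∑' l : tails b, S.pathProb l ≤ 1 :=
        ih b (tails b) (fun l hl => hl.2) fun l hl => by simpa using hLn _ hl.1
      calc ∑' l : L, S.pathProb l ≤ ∑' l : ⋃ b, List.cons s '' tails b, S.pathProb l :=
            ENNReal.tsum_mono_subtype _ hL
        _ ≤ ∑' (b) (l : List.cons s '' tails b), S.pathProb l :=
            ENNReal.tsum_iUnion_le_tsum _ _
        _ = ∑' b, S.P s b * ∑' l : tails b, S.pathProb l := by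
            refine tsum_congr fun b => ?_
            rw [tsum_image _ List.cons_injective.injOn, ← ENNReal.tsum_mul_left]
            exact tsum_congr fun l => S.pathProb_cons (head?_eq_of_mem_terminalPaths l.2.2) s
        _ ≤ ∑' b, (S.P s b : ℝ≥0∞) :=
            ENNReal.tsum_le_tsum fun b => mul_le_of_le_one_right' (htails b)
        _ = 1 := S.sum_one s (not_not.1 hs)

lemma probNF_le_one (s : A) : S.probNF s ≤ 1 := by
  rw [probNF_eq_tsum_terminalPaths, ENNReal.tsum_eq_iSup_sum]
  refine iSup_le fun F => ?_
  let F' := F.map (Function.Embedding.subtype _)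
  calc ∑ l ∈ F, S.pathProb l = ∑' l : (F' : Set (List A)), S.pathProb l := by
        rw [Finset.tsum_subtype', Finset.sum_map]; rfl
    _ ≤ 1 := by
      refine S.tsum_pathProb_le_one_of_length_le _ s _ (fun l hl => ?_) fun l hl =>
        Finset.le_sup (f := List.length) hl
      obtain ⟨l, -, rfl⟩ := Finset.mem_map.1 hl
      exact l.2

lemma tsum_P_mul_probNF_le (s : A) :
    ∑' b : {b // S.rel s b}, S.P s b * S.probNF b ≤ S.probNF s := by
  simp only [probNF_eq_tsum_terminalPaths, ← ENNReal.tsum_mul_left]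
  let extend (p : Σ b : {b // S.rel s b}, terminalPaths S.rel b) : terminalPaths S.rel s :=
    ⟨s :: p.2, mem_terminalPaths_iff.2 (Or.inr ⟨p.1, p.2, p.1.2, p.2.2, rfl⟩)⟩
  have hextend : extend.Injective := by
    rintro ⟨⟨b₁, _⟩, l₁, hl₁⟩ ⟨⟨b₂, _⟩, l₂, hl₂⟩ h
    obtain rfl : l₁ = l₂ := List.cons_injective (congrArg Subtype.val h)
    obtain rfl : b₁ = b₂ := Option.some_injective _
      ((head?_eq_of_mem_terminalPaths hl₁).symm.trans (head?_eq_of_mem_terminalPaths hl₂))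
    rfl
  calc _ = ∑' (b : {b // S.rel s b}) (l : terminalPaths S.rel b), S.pathProb (extend ⟨b, l⟩) :=
        tsum_congr fun b => tsum_congr fun l =>
          (S.pathProb_cons (head?_eq_of_mem_terminalPaths l.2) s).symm
    _ = ∑' p, S.pathProb (extend p) := (ENNReal.tsum_sigma' fun p => S.pathProb (extend p)).symm
    _ ≤ _ := ENNReal.tsum_comp_le_tsum_of_injective hextend fun l => S.pathProb l

lemma one_le_probNF {s : A} (hs : ∀ b, S.rel s b → 1 ≤ S.probNF b) : 1 ≤ S.probNF s := by
  by_cases hred : ∃ b, S.rel s b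
  · calc 1 = ∑' b : {b // S.rel s b}, (S.P s b : ℝ≥0∞) := (S.tsum_P_succ_eq_one hred).symm
      _ ≤ ∑' b : {b // S.rel s b}, S.P s b * S.probNF b :=
          ENNReal.tsum_le_tsum fun b => le_mul_of_one_le_right' (hs b b.2)
      _ ≤ S.probNF s := S.tsum_P_mul_probNF_le s
  · rw [probNF_eq_tsum_terminalPaths]
    calc 1 = S.pathProb [s] := (S.pathProb_singleton s).symm
      _ ≤ _ := ENNReal.le_tsum (⟨[s], s, hred, isPath_singleton S.rel s⟩ : terminalPaths S.rel s)

end PARS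

/-- a locally almost-surely convergent PARS is almost-surely
terminating. -/
theorem asTerminating_of_locallyASConvergent
    {A : Type*} [Countable A] (S : PARS A) (h : S.LocallyASConvergent) :
    S.ASTerminating := by
  have h_succ (s b : A) (hsb : S.rel s b) : 1 ≤ S.probNF b := by
    obtain ⟨t, ht, hbt, -, hreach, -⟩ := h s b b hsb hsb
    exact hreach ▸ S.probReach_le_probNF ⟨ht, hbt⟩
  intro s
  have h_one : S.probNF s = 1 := le_antisymm (S.probNF_le_one s) (S.one_le_probNF (h_succ s))
  simp [PARS.probDiverge, h_one]
end

section
/- If a probabilistic abstract reduction system is almost-surely terminating and confluent, then it is almost-surely convergent. -/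
open scoped ENNReal NNReal

/-- an almost-surely terminating and confluent PARS is
almost-surely convergent. -/
theorem asConvergent_of_asTerminating_of_confluent
    {A : Type*} [Countable A] (S : PARS A)
    (hterm : S.ASTerminating) (hconf : Confluent S.rel) :
    S.ASConvergent := by
  -- normal forms don't reduce further
  have nf_eq : ∀ t u : A, NormalForm S.rel t → Relation.ReflTransGen S.rel t u → t = u := by
    intro t u ht hr
    rcases hr.cases_head with h | ⟨c, hc, _⟩
    · exact h
    · exact absurd ⟨c, hc⟩ ht
  -- probNF is always 1
  have hNF1 : ∀ s, S.probNF s = 1 := by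
    intro s
    have h := hterm s
    unfold PARS.ASTerminating PARS.probDiverge at h
    have h1 : (S.probNF s).toReal = 1 := by linarith
    rwa [ENNReal.toReal_eq_one_iff] at h1
  -- NF is nonempty
  have hne : ∀ s, ∃ t, t ∈ NFof S.rel s := by
    intro s
    by_contra h
    push_neg at h
    haveI : IsEmpty ↥(NFof S.rel s) := ⟨fun x => h x.1 x.2⟩
    have := hNF1 s
    rw [PARS.probNF, tsum_empty] at this
    exact zero_ne_one this
  intro s s₁ s₂ h₁ h₂
  obtain ⟨t', ht'₁, ht'₂⟩ := hconf s s₁ s₂ h₁ h₂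
  obtain ⟨t, htnf, htr⟩ := hne t'
  refine ⟨t, htnf, ht'₁.trans htr, ht'₂.trans htr, ?_, ?_⟩
  all_goals {
    first
      | (have hreach : Relation.ReflTransGen S.rel s₁ t := ht'₁.trans htr
         have key : ∀ x ∈ NFof S.rel s₁, x = t := by
           intro x hx
           obtain ⟨u, hu₁, hu₂⟩ := hconf s₁ x t hx.2 hreach
           rw [nf_eq x u hx.1 hu₁, nf_eq t u htnf hu₂]
         have : S.probNF s₁ = S.probReach s₁ t :=
           tsum_eq_single (⟨t, htnf, hreach⟩ : NFof S.rel s₁)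
             (fun b hb => (hb (Subtype.ext (key b.1 b.2))).elim)
         rw [← this]; exact hNF1 s₁)
      | (have hreach : Relation.ReflTransGen S.rel s₂ t := ht'₂.trans htr
         have key : ∀ x ∈ NFof S.rel s₂, x = t := by
           intro x hx
           obtain ⟨u, hu₁, hu₂⟩ := hconf s₂ x t hx.2 hreach
           rw [nf_eq x u hx.1 hu₁, nf_eq t u htnf hu₂]
         have : S.probNF s₂ = S.probReach s₂ t :=
           tsum_eq_single (⟨t, htnf, hreach⟩ : NFof S.rel s₂)
             (fun b hb => (hb (Subtype.ext (key b.1 b.2))).elim)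
         rw [← this]; exact hNF1 s₂)
  }
end
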